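/- For every natural number m ≥ 6, the number of natural numbers p with m ≤ p < m + 30 such that both p and p + 2 are prime is at most 3. -/

import Mathlib

/-! Beyond 5, a twin pair `p, p + 2` has `p` prime to 2, 3, 5 and `p + 2` prime to 3, 5, which
leaves only `p ≡ 11, 17, 29 (mod 30)`; reduction mod 30 is injective on 30 consecutive numbers. -/

theorem Nat.Prime.mod_ne_zero_of_lt {p d : ℕ} (hp : p.Prime) (hd : d ≠ 1) (hdp : d < p) :
    p % d ≠ 0 := fun h => by
  rcases hp.eq_one_or_self_of_dvd d (Nat.dvd_of_mod_eq_zero h) with h | h <;> omega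

theorem Nat.mod_thirty_of_twin_prime {p : ℕ} (hp : p.Prime) (hp2 : (p + 2).Prime) (h5 : 5 < p) :
    p % 30 ∈ ({11, 17, 29} : Finset ℕ) := by
  have h2 := hp.mod_ne_zero_of_lt (d := 2) (by decide) (by omega)
  have h3 := hp.mod_ne_zero_of_lt (d := 3) (by decide) (by omega)
  have h5 := hp.mod_ne_zero_of_lt (d := 5) (by decide) (by omega)
  have h3' := hp2.mod_ne_zero_of_lt (d := 3) (by decide) (by omega)
  have h5' := hp2.mod_ne_zero_of_lt (d := 5) (by decide) (by omega)
  have residues : ∀ r ∈ Finset.range 30, r % 2 ≠ 0 → r % 3 ≠ 0 → r % 5 ≠ 0 → (r + 2) % 3 ≠ 0 →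
      (r + 2) % 5 ≠ 0 → r ∈ ({11, 17, 29} : Finset ℕ) := by decide
  exact residues (p % 30) (Finset.mem_range.mpr (by omega))
    (by omega) (by omega) (by omega) (by omega) (by omega)

theorem twin_primes_in_thirty_block_le_three (m : ℕ) (hm : 6 ≤ m) :
    ((Finset.Ico m (m + 30)).filter (fun p => p.Prime ∧ (p + 2).Prime)).card ≤ 3 := by
  calc _ ≤ ({11, 17, 29} : Finset ℕ).card := by
        refine Finset.card_le_card_of_injOn (· % 30) (fun p hp => ?_)
          ((Nat.mod_injOn_Ico m 30).mono (Finset.filter_subset _ _))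
        obtain ⟨hmem, hprime, hprime2⟩ := Finset.mem_filter.mp hp
        exact Nat.mod_thirty_of_twin_prime hprime hprime2 (by grind)
    _ = 3 := rfl
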